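/- arXiv:1607.03824 — 3 statements merged into one kernel-verified Lean document; each statement's English description precedes it below -/
import Mathlib

section
/- Let z_1, ..., z_u be finitely many distinct complex numbers of absolute value 1. Then there exists a real constant R with 0 < R < 1/2 and infinitely many positive integers n such that for every t = 1, ..., u and every k = 1, ..., n, either z_t = e^{2πik/n} or |z_t − e^{2πik/n}| ≥ 2 sin(Rπ/n). -/
/-!
Write `z_t = exp (2πi θ_t)` with `θ_t ∈ ℝ/ℤ`. By compactness of the torus `(ℝ/ℤ)^u`,
the multiples `m • θ` come back arbitrarily close to `0` for arbitrarily large `m`; for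
`n = m + 1`, `n • θ_t` is then close to `θ_t`, so it stays at distance `≥ R` from `0` unless
`θ_t = 0`. Every vertex `k/n` is `n`-torsion, so `n • (θ_t - k/n) = n • θ_t` and `θ_t` is at
distance `≥ R/n` from every vertex it is not equal to; when `θ_t = 0` one uses instead that a
nonzero `n`-torsion point has norm `≥ 1/n`. Finally, points at circular distance `d` span a
chord of length `2 sin (π d)`.
-/

open Filter Topology Real

theorem frequently_norm_nsmul_lt {G : Type*} [SeminormedAddCommGroup G] [CompactSpace G] (x : G)
    {ε : ℝ} (hε : 0 < ε) : ∃ᶠ m : ℕ in atTop, ‖m • x‖ < ε := by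
  refine frequently_atTop.2 fun N => ?_
  obtain ⟨_, -, φ, hφ, hlim⟩ :=
    isCompact_univ.tendsto_subseq (x := fun j : ℕ => j • (N + 1) • x) fun _ => trivial
  obtain ⟨i, hi⟩ := Metric.cauchySeq_iff'.1 hlim.cauchySeq ε hε
  have hφi : φ i < φ (i + 1) := hφ (lt_add_one i)
  refine ⟨(φ (i + 1) - φ i) * (N + 1), by nlinarith [Nat.sub_pos_of_lt hφi], ?_⟩
  rw [mul_nsmul', sub_nsmul _ hφi.le, ← sub_eq_add_neg, ← dist_eq_norm]
  exact hi (i + 1) (Nat.le_succ i)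

theorem eventually_forall_lt_norm_of_ne_zero {ι E : Type*} [Finite ι] [NormedAddGroup E]
    (f : ι → E) : ∀ᶠ r in 𝓝 (0 : ℝ), ∀ i, f i ≠ 0 → r < ‖f i‖ := by
  refine eventually_all.2 fun i => ?_
  by_cases h : f i = 0
  · exact .of_forall fun _ h' => absurd h h'
  · exact (eventually_lt_nhds (norm_pos_iff.2 h)).mono fun _ hr _ => hr

theorem AddCircle.le_mul_norm_of_nsmul_eq_zero {p : ℝ} [Fact (0 < p)] {y : AddCircle p} {n : ℕ}
    (hn : 0 < n) (hy : y ≠ 0) (h : n • y = 0) : p ≤ n * ‖y‖ :=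
  calc p ≤ addOrderOf y • ‖y‖ := le_add_order_smul_norm_of_isOfFinAddOrder
        (isOfFinAddOrder_iff_nsmul_eq_zero.2 ⟨n, hn, h⟩) hy
    _ ≤ n * ‖y‖ := by
        rw [nsmul_eq_mul]
        gcongr
        exact_mod_cast addOrderOf_le_of_nsmul_eq_zero hn h

namespace UnitAddCircle

theorem exists_toCircle_eq {z : ℂ} (hz : ‖z‖ = 1) :
    ∃ x : UnitAddCircle, (x.toCircle : ℂ) = z := by
  let w : Circle := ⟨z, by simpa [Submonoid.unitSphere] using hz⟩
  exact ⟨(AddCircle.homeomorphCircle one_ne_zero).symm w, by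
    rw [← AddCircle.homeomorphCircle_apply one_ne_zero, Homeomorph.apply_symm_apply]⟩

theorem toCircle_div_natCast (k n : ℕ) :
    (AddCircle.toCircle ((k / n : ℝ) : UnitAddCircle) : ℂ) =
      Complex.exp (2 * π * Complex.I * k / n) := by
  rw [AddCircle.toCircle_apply_mk, Circle.coe_exp]
  push_cast
  congr 1
  ring

theorem nsmul_div_natCast {n : ℕ} (hn : n ≠ 0) (k : ℕ) :
    n • ((k / n : ℝ) : UnitAddCircle) = 0 := by
  rw [← AddCircle.coe_nsmul, nsmul_eq_mul, mul_div_cancel₀ _ (by positivity), ← nsmul_one,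
    AddCircle.coe_nsmul, AddCircle.coe_period, nsmul_zero]

theorem abs_sin_pi_mul (x : ℝ) : |sin (π * x)| = sin (π * ‖(x : UnitAddCircle)‖) := by
  have hx : π * x = π * (x - round x) + round x * π := by ring
  have hle : |π * (x - round x)| ≤ π := by
    rw [abs_mul, abs_of_pos pi_pos]
    nlinarith [pi_pos, abs_sub_round x]
  rw [norm_eq, hx, sin_add_int_mul_pi, abs_mul, abs_zpow, abs_neg, abs_one, one_zpow, one_mul,
    abs_sin_eq_sin_abs_of_abs_le_pi hle, abs_mul, abs_of_pos pi_pos]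

theorem norm_toCircle_sub_one (x : UnitAddCircle) :
    ‖(x.toCircle : ℂ) - 1‖ = 2 * sin (π * ‖x‖) := by
  induction x using QuotientAddGroup.induction_on with | H a => ?_
  have : (AddCircle.toCircle (a : UnitAddCircle) : ℂ) =
      Complex.exp (Complex.I * (2 * π * a : ℝ)) := by
    rw [AddCircle.toCircle_apply_mk, Circle.coe_exp, div_one, mul_comm]
  rw [this, Complex.norm_exp_I_mul_ofReal_sub_one, norm_mul, ← abs_sin_pi_mul,
    show 2 * π * a / 2 = π * a by ring, Real.norm_eq_abs, Real.norm_eq_abs, abs_two]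

theorem norm_toCircle_sub_toCircle (x y : UnitAddCircle) :
    ‖(x.toCircle : ℂ) - y.toCircle‖ = 2 * sin (π * ‖x - y‖) := by
  have : (x.toCircle : ℂ) = (x - y).toCircle * y.toCircle := by
    rw [← Circle.coe_mul, ← AddCircle.toCircle_add, sub_add_cancel]
  rw [this, ← sub_one_mul, norm_mul, Circle.norm_coe, mul_one, norm_toCircle_sub_one]

theorem two_mul_sin_le_norm_toCircle_sub {x y : UnitAddCircle} {r : ℝ} (hr : 0 ≤ r)
    (h : r ≤ ‖x - y‖) : 2 * sin (π * r) ≤ ‖(x.toCircle : ℂ) - y.toCircle‖ := by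
  have hhalf : ‖x - y‖ ≤ 1 / 2 := by
    simpa using AddCircle.norm_le_half_period 1 (x := x - y) one_ne_zero
  rw [norm_toCircle_sub_toCircle]
  gcongr
  apply sin_le_sin_of_le_of_le_pi_div_two <;> nlinarith [pi_pos]

theorem le_mul_norm_sub_of_nsmul_eq_zero {θ q : UnitAddCircle} {n : ℕ} {r : ℝ} (hn : 0 < n)
    (hr : r ≤ 1) (hθ : θ ≠ 0 → r ≤ ‖n • θ‖) (hq : n • q = 0) (hne : θ ≠ q) :
    r ≤ n * ‖θ - q‖ := by
  have hnsmul : n • (θ - q) = n • θ := by rw [nsmul_sub, hq, sub_zero]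
  by_cases h0 : θ = 0
  · have := AddCircle.le_mul_norm_of_nsmul_eq_zero hn (sub_ne_zero.2 hne)
      (by rw [hnsmul, h0, nsmul_zero])
    linarith
  · calc r ≤ ‖n • (θ - q)‖ := hnsmul ▸ hθ h0
      _ ≤ n * ‖θ - q‖ := norm_nsmul_le

end UnitAddCircle

theorem ngons_far_away_from_points_general
    (u : ℕ) (z : Fin u → ℂ)
    (habs : ∀ t, ‖z t‖ = 1) :
    ∃ R : ℝ, 0 < R ∧ R < 1 / 2 ∧
      ∀ N : ℕ, ∃ n : ℕ, N < n ∧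
        ∀ t : Fin u, ∀ k : ℕ, 1 ≤ k → k ≤ n →
          z t = Complex.exp (2 * Real.pi * Complex.I * k / n) ∨
          2 * Real.sin (R * Real.pi / n) ≤
            ‖z t - Complex.exp (2 * Real.pi * Complex.I * k / n)‖ := by
  choose θ hθ using fun t => UnitAddCircle.exists_toCircle_eq (habs t)
  obtain ⟨r, hr0, hrθ, hr⟩ :=
    ((eventually_forall_lt_norm_of_ne_zero θ).and (eventually_lt_nhds one_half_pos)).exists_gt
  refine ⟨r / 2, half_pos hr0, by linarith, fun N => ?_⟩
  obtain ⟨m, hNm, hm⟩ := frequently_atTop.1 (frequently_norm_nsmul_lt θ (half_pos hr0)) N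
  refine ⟨m + 1, by omega, fun t k _ _ => ?_⟩
  have hfar : θ t ≠ 0 → r / 2 ≤ ‖(m + 1) • θ t‖ := fun h => by
    have hmt : ‖m • θ t‖ < r / 2 := (pi_norm_lt_iff (half_pos hr0)).1 hm t
    calc r / 2 ≤ ‖θ t‖ - ‖m • θ t‖ := by linarith [hrθ t h]
      _ ≤ ‖(m + 1) • θ t‖ := by rw [succ_nsmul']; exact norm_sub_le_norm_add _ _
  rw [← hθ t, ← UnitAddCircle.toCircle_div_natCast]
  by_cases hne : θ t = ((k / (m + 1 : ℕ) : ℝ) : UnitAddCircle)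
  · exact .inl (by rw [hne])
  refine .inr ?_
  rw [show r / 2 * π / (m + 1 : ℕ) = π * (r / 2 / (m + 1 : ℕ)) by ring]
  refine UnitAddCircle.two_mul_sin_le_norm_toCircle_sub (by positivity) ?_
  rw [div_le_iff₀' (by positivity)]
  exact UnitAddCircle.le_mul_norm_sub_of_nsmul_eq_zero m.succ_pos (by linarith) hfar
    (UnitAddCircle.nsmul_div_natCast m.succ_ne_zero k) hne

/-- **Lemma (n-gons far away from a given set of points on the circle).**
Given distinct points `z₁, …, z_u` on the unit circle, there is `0 < R < 1/2` and
infinitely many `n` such that each vertex of the regular `n`-gon either coincides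
with one of the `z_t` or has distance at least `2 sin (Rπ/n)` from all of them. -/
theorem ngons_far_away_from_points
    (u : ℕ) (z : Fin u → ℂ)
    (habs : ∀ t, ‖z t‖ = 1)
    (hinj : Function.Injective z) :
    ∃ R : ℝ, 0 < R ∧ R < 1 / 2 ∧
      ∀ N : ℕ, ∃ n : ℕ, N < n ∧
        ∀ t : Fin u, ∀ k : ℕ, 1 ≤ k → k ≤ n →
          z t = Complex.exp (2 * Real.pi * Complex.I * k / n) ∨
          2 * Real.sin (R * Real.pi / n) ≤
            ‖z t - Complex.exp (2 * Real.pi * Complex.I * k / n)‖ :=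
  ngons_far_away_from_points_general u z habs
end

section
/- Let Λ be a nonzero polynomial with real coefficients such that Λ(1) ≠ 0 and Λ(−1) ≠ 0, and assume Λ has at least one complex root of absolute value 1. Let μ_max denote the maximal multiplicity of a root of Λ of absolute value 1. Then liminf_{n→∞} (−log σ̂_n(Λ))/(log n) = μ_max. -/
open Polynomial Filter

/-- `sigmaHat Λ n` is the smallest positive value of `|Λ(ζ)|` over the `n`-th roots
of unity `ζ`. -/
noncomputable def sigmaHat (Λ : Polynomial ℂ) (n : ℕ) : ℝ :=
  sInf {r : ℝ | ∃ ζ : ℂ, ζ ^ n = 1 ∧ Polynomial.eval ζ Λ ≠ 0 ∧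
    r = ‖Polynomial.eval ζ Λ‖}

/-!
Let `μ` be the largest multiplicity of a root of `Λ` on the unit circle, attained at `ξ`.

Of any `deg Λ + 1` consecutive `n`-th roots of unity following `ξ` one is not a root of `Λ`;
it lies within `O(1/n)` of `ξ`, so `σ̂_n(Λ) = O(n^(-μ))` and the liminf is at least `μ`.

Conversely, `|Λ(ζ)|` is at least a constant times `|ζ - ρ|^(mult ρ)` for the root `ρ` nearest
to `ζ`, because the other roots stay a fixed distance away. Roots off the circle are a fixed
distance away from every `n`-th root of unity. For the roots `ρ ≠ 1` on the circle, recurrence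
of `d ↦ (ρ^d)_ρ` on the compact torus gives infinitely many `d` with all `ρ^d` close to `1`;
for `n = d + 1` every `ρ^n` is then close to `ρ`, hence away from `1`, and
`|ρ^n - ζ^n| ≤ n |ρ - ζ|` gives `|ζ - ρ| ≫ 1/n`; for `ρ = 1`, distinct `n`-th roots of unity
are `1/n` apart. Hence `σ̂_n(Λ) ≫ n^(-μ)` for infinitely many `n`, and the liminf is at most `μ`.
-/

open Topology

theorem Finset.exists_pos_forall_lt {ι : Type*} (s : Finset ι) {f : ι → ℝ}
    (hf : ∀ i ∈ s, 0 < f i) : ∃ ε > 0, ∀ i ∈ s, ε < f i := by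
  have : ∀ᶠ ε in 𝓝[>] (0 : ℝ), ∀ i ∈ s, ε < f i :=
    (eventually_all_finset s).2 fun i hi ↦
      eventually_nhdsWithin_of_eventually_nhds (eventually_lt_nhds (hf i hi))
  obtain ⟨ε, hε, hpos⟩ := (this.and self_mem_nhdsWithin).exists
  exact ⟨ε, hpos, hε⟩

theorem norm_pow_sub_pow_le {R : Type*} [NormedRing R] [NormOneClass R] {a b : R}
    (ha : ‖a‖ ≤ 1) (hb : ‖b‖ ≤ 1) (n : ℕ) : ‖a ^ n - b ^ n‖ ≤ n * ‖a - b‖ := by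
  induction n with
  | zero => simp
  | succ n ih =>
    have hsplit : a ^ (n + 1) - b ^ (n + 1) = a * (a ^ n - b ^ n) + (a - b) * b ^ n := by
      simp only [pow_succ']; noncomm_ring
    calc ‖a ^ (n + 1) - b ^ (n + 1)‖ ≤ ‖a‖ * ‖a ^ n - b ^ n‖ + ‖a - b‖ * ‖b ^ n‖ := by
          rw [hsplit]; exact norm_add_le_of_le (norm_mul_le _ _) (norm_mul_le _ _)
      _ ≤ 1 * (n * ‖a - b‖) + ‖a - b‖ * 1 := by
          gcongr
          exact (norm_pow_le b n).trans (pow_le_one₀ (norm_nonneg b) hb)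
      _ = (n + 1 : ℕ) * ‖a - b‖ := by push_cast; ring

theorem inv_le_norm_sub_one_of_pow_eq_one {u : ℂ} {n : ℕ} (hn : u ^ n = 1) (hu : u ≠ 1) :
    (n : ℝ)⁻¹ ≤ ‖u - 1‖ := by
  rcases n.eq_zero_or_pos with rfl | hpos
  · simp
  have hu_norm : ‖u‖ = 1 := Complex.norm_eq_one_of_pow_eq_one hn hpos.ne'
  -- `∑ i < n, u ^ i = 0`, so `n = ∑ (1 - u ^ i)` with every term of norm `≤ n ‖u - 1‖`
  have hsum : (n : ℂ) = ∑ i ∈ Finset.range n, (1 ^ i - u ^ i) := by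
    simp [Finset.sum_sub_distrib, geom_sum_eq hu, hn]
  have hle : (n : ℝ) ≤ n * (n * ‖u - 1‖) := by
    calc (n : ℝ) = ‖∑ i ∈ Finset.range n, (1 ^ i - u ^ i)‖ := by rw [← hsum, Complex.norm_natCast]
      _ ≤ ∑ i ∈ Finset.range n, ‖(1 : ℂ) ^ i - u ^ i‖ := norm_sum_le _ _
      _ ≤ ∑ _i ∈ Finset.range n, n * ‖u - 1‖ := by
          refine Finset.sum_le_sum fun i hi ↦ ?_
          rw [← norm_neg (u - 1), neg_sub]
          refine (norm_pow_sub_pow_le (by simp) hu_norm.le i).trans ?_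
          gcongr
          exact (Finset.mem_range.1 hi).le
      _ = n * (n * ‖u - 1‖) := by simp
  have hnR : (0 : ℝ) < n := by exact_mod_cast hpos
  rw [inv_le_iff_one_le_mul₀ hnR]
  nlinarith

theorem exists_ge_forall_norm_pow_sub_one_lt (s : Finset ℂ) (hs : ∀ z ∈ s, ‖z‖ = 1)
    {ε : ℝ} (hε : 0 < ε) (N : ℕ) : ∃ d ≥ N, ∀ z ∈ s, ‖z ^ d - 1‖ < ε := by
  let x : ℕ → s → ℂ := fun q z ↦ (z : ℂ) ^ q
  have hx : ∀ q, x q ∈ Metric.closedBall 0 1 := fun q ↦ by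
    simp [x, pi_norm_le_iff_of_nonneg, hs]
  obtain ⟨a, -, φ, hφ, hlim⟩ := tendsto_subseq_of_bounded Metric.isBounded_closedBall hx
  obtain ⟨J, hJ⟩ := Metric.tendsto_atTop.1 hlim (ε / 2) (half_pos hε)
  obtain ⟨d, hd⟩ : ∃ d, φ (N + J) = d + φ J :=
    ⟨_, (Nat.sub_add_cancel (hφ.monotone (Nat.le_add_left J N))).symm⟩
  refine ⟨d, by linarith [hφ.add_le_nat N J], fun z hz ↦ ?_⟩
  have hclose : dist (x (φ (N + J))) (x (φ J)) < ε := by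
    calc _ ≤ dist (x (φ (N + J))) a + dist (x (φ J)) a := dist_triangle_right _ _ _
      _ < ε / 2 + ε / 2 := add_lt_add (hJ _ (Nat.le_add_left J N)) (hJ _ le_rfl)
      _ = ε := add_halves ε
  calc ‖z ^ d - 1‖ = dist (x (φ (N + J)) ⟨z, hz⟩) (x (φ J) ⟨z, hz⟩) := by
        simp [x, hd, dist_eq_norm, pow_add, ← sub_one_mul, hs z hz]
    _ ≤ dist (x (φ (N + J))) (x (φ J)) := dist_le_pi_dist _ _ _
    _ < ε := hclose

theorem exists_pos_frequently_forall_le_norm_pow_sub_one (s : Finset ℂ)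
    (hs : ∀ z ∈ s, ‖z‖ = 1) (hs₁ : 1 ∉ s) :
    ∃ c > 0, ∃ᶠ n in atTop, ∀ z ∈ s, c ≤ ‖z ^ n - 1‖ := by
  obtain ⟨c, hc, hcz⟩ := s.exists_pos_forall_lt (f := fun z ↦ ‖z - 1‖ / 2) fun z hz ↦ by
    have : z - 1 ≠ 0 := sub_ne_zero.2 (ne_of_mem_of_not_mem hz hs₁)
    positivity
  refine ⟨c, hc, frequently_atTop.2 fun N ↦ ?_⟩
  obtain ⟨d, hdN, hd⟩ := exists_ge_forall_norm_pow_sub_one_lt s hs hc N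
  refine ⟨d + 1, by omega, fun z hz ↦ ?_⟩
  -- `z ^ (d + 1)` is close to `z`, which is far from `1`
  have hshift : ‖z - z ^ (d + 1)‖ = ‖z ^ d - 1‖ := by
    rw [pow_succ', ← mul_one_sub, norm_mul, hs z hz, one_mul, norm_sub_rev]
  have hdiff := norm_sub_norm_le (z - 1) (z - z ^ (d + 1))
  rw [sub_sub_sub_cancel_left, hshift] at hdiff
  linarith [hcz z hz, hd z hz]

theorem exists_pos_frequently_div_le_norm_sub (s : Finset ℂ) (hs : ∀ z ∈ s, ‖z‖ = 1) :
    ∃ κ > 0, ∃ᶠ n : ℕ in atTop, ∀ ρ ∈ s, ∀ ζ : ℂ, ζ ^ n = 1 → ζ ≠ ρ → κ / n ≤ ‖ζ - ρ‖ := by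
  obtain ⟨c, hc, hfreq⟩ := exists_pos_frequently_forall_le_norm_pow_sub_one (s.erase 1)
    (fun z hz ↦ hs z (Finset.mem_of_mem_erase hz)) (Finset.notMem_erase 1 s)
  refine ⟨min c 1, lt_min hc one_pos, (hfreq.and_eventually (eventually_gt_atTop 0)).mono ?_⟩
  rintro n ⟨hfar, hn⟩ ρ hρ ζ hζ hζρ
  have hnR : (0 : ℝ) < n := by exact_mod_cast hn
  rw [div_le_iff₀ hnR]
  by_cases hρ₁ : ρ = 1
  · subst hρ₁
    have := inv_le_norm_sub_one_of_pow_eq_one hζ hζρ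
    rw [inv_le_iff_one_le_mul₀ hnR] at this
    nlinarith [min_le_right c 1]
  · have hζ_norm : ‖ζ‖ = 1 := Complex.norm_eq_one_of_pow_eq_one hζ hn.ne'
    calc min c 1 ≤ ‖ρ ^ n - ζ ^ n‖ := by
          rw [hζ]; exact (min_le_left c 1).trans (hfar ρ (Finset.mem_erase.2 ⟨hρ₁, hρ⟩))
      _ ≤ n * ‖ρ - ζ‖ := norm_pow_sub_pow_le (hs ρ hρ).le hζ_norm.le n
      _ = ‖ζ - ρ‖ * n := by rw [norm_sub_rev, mul_comm]

open Complex in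
theorem norm_exp_I_mul_sub_exp_I_mul_le (x y : ℝ) :
    ‖exp (I * x) - exp (I * y)‖ ≤ |x - y| := by
  have h : exp (I * x) - exp (I * y) = exp (I * y) * (exp (I * ↑(x - y)) - 1) := by
    rw [mul_sub, mul_one, ← Complex.exp_add]; push_cast; ring_nf
  rw [h, norm_mul, mul_comm I, norm_exp_ofReal_mul_I, one_mul, ← Real.norm_eq_abs]
  exact Real.norm_exp_I_mul_ofReal_sub_one_le

open Complex in
theorem exists_pow_eq_one_eval_ne_zero_norm_sub_le {Q : ℂ[X]} (hQ : Q ≠ 0) {ξ : ℂ}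
    (hξ : ‖ξ‖ = 1) {n : ℕ} (hn : Q.natDegree < n) :
    ∃ ζ : ℂ, ζ ^ n = 1 ∧ Q.eval ζ ≠ 0 ∧ ‖ζ - ξ‖ ≤ 2 * Real.pi * (Q.natDegree + 1) / n := by
  have hn₀ : n ≠ 0 := by omega
  have hnR : (0 : ℝ) < n := by exact_mod_cast Nat.pos_of_ne_zero hn₀
  have hω := isPrimitiveRoot_exp n hn₀
  set ω := exp (2 * Real.pi * I / n)
  set ψ := arg ξ + 2 * Real.pi
  have hψ : 0 ≤ ψ := by linarith [neg_pi_lt_arg ξ, Real.pi_pos]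
  have hξψ : exp (I * ψ) = ξ := by
    have := norm_mul_exp_arg_mul_I ξ
    rw [hξ, ofReal_one, one_mul] at this
    rw [← this, ofReal_add, mul_add, exp_add, mul_comm I, ofReal_mul, ofReal_ofNat,
      mul_comm I (2 * _), exp_two_pi_mul_I, mul_one]
  -- the candidates `ω ^ (k + t)`, `t ≤ deg Q`, are the `n`-th roots of unity just after `ξ`
  set k := ⌊ψ * n / (2 * Real.pi)⌋₊
  have hk : (k : ℝ) ≤ ψ * n / (2 * Real.pi) := Nat.floor_le (by positivity)
  have hk' : ψ * n / (2 * Real.pi) < k + 1 := Nat.lt_floor_add_one _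
  have hcand : ∀ t : ℕ, ω ^ (k + t) = exp (I * ↑(2 * Real.pi * (k + t) / n)) := fun t ↦ by
    rw [← exp_nat_mul]; push_cast; ring_nf
  obtain ⟨t, hQt⟩ : ∃ t : Fin (Q.natDegree + 1), Q.eval (ω ^ (k + t)) ≠ 0 := by
    by_contra! hroots
    refine hQ (eq_zero_of_natDegree_lt_card_of_eval_eq_zero Q (fun s t hst ↦ ?_) hroots (by simp))
    rw [pow_add, pow_add] at hst
    exact Fin.ext (hω.pow_inj (by omega) (by omega)
      (mul_left_cancel₀ (pow_ne_zero _ (hω.ne_zero hn₀)) hst))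
  refine ⟨ω ^ (k + t), by rw [pow_right_comm, hω.pow_eq_one, one_pow], hQt, ?_⟩
  rw [hcand, ← hξψ]
  refine (norm_exp_I_mul_sub_exp_I_mul_le _ _).trans ?_
  have hdiff : 2 * Real.pi * (k + t) / n - ψ =
      2 * Real.pi / n * (k + t - ψ * n / (2 * Real.pi)) := by
    field_simp
  have htD : (t : ℝ) ≤ Q.natDegree := by exact_mod_cast Nat.lt_succ_iff.1 t.2
  rw [hdiff, abs_mul, abs_of_pos (by positivity), mul_comm, mul_div_assoc',
    div_le_div_iff_of_pos_right hnR, mul_comm]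
  gcongr
  rw [abs_le]; constructor <;> linarith

theorem IsCompact.exists_pos_forall_norm_eval_le_mul_norm_sub_pow {K : Set ℂ} (hK : IsCompact K)
    (Q : ℂ[X]) (ξ : ℂ) :
    ∃ C > 0, ∀ ζ ∈ K, ‖Q.eval ζ‖ ≤ C * ‖ζ - ξ‖ ^ Q.rootMultiplicity ξ := by
  set m := Q.rootMultiplicity ξ
  obtain ⟨R, hR⟩ := pow_rootMultiplicity_dvd Q ξ
  obtain ⟨C, hC, hCR⟩ :=
    (hK.image_of_continuousOn R.continuous.continuousOn).isBounded.exists_pos_norm_le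
  refine ⟨C, hC, fun ζ hζ ↦ ?_⟩
  rw [hR, eval_mul, norm_mul, mul_comm, eval_pow, eval_sub, eval_X, eval_C, norm_pow]
  exact mul_le_mul_of_nonneg_right (hCR _ (Set.mem_image_of_mem _ hζ)) (by positivity)

theorem Multiset.pow_card_le_norm_prod {K : Type*} [NormedField K] {s : Multiset K} {c : ℝ}
    (hc : 0 ≤ c) (h : ∀ x ∈ s, c ≤ ‖x‖) : c ^ card s ≤ ‖s.prod‖ := by
  induction s using Multiset.induction_on with
  | empty => simp
  | cons a s ih =>
    rw [prod_cons, norm_mul, card_cons, pow_succ, mul_comm]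
    have hs := ih fun x hx ↦ h x (mem_cons_of_mem hx)
    exact mul_le_mul (h a (mem_cons_self a s)) hs (by positivity) (norm_nonneg a)

theorem exists_pos_forall_exists_isRoot_mul_norm_sub_pow_le {Q : ℂ[X]} (hQ : Q ≠ 0) {ξ : ℂ}
    (hξ : Q.IsRoot ξ) :
    ∃ c > 0, ∀ ζ : ℂ, ∃ ρ, Q.IsRoot ρ ∧ c * ‖ζ - ρ‖ ^ Q.rootMultiplicity ρ ≤ ‖Q.eval ζ‖ := by
  classical
  have hmem : ∀ {ρ}, ρ ∈ Q.roots.toFinset ↔ Q.IsRoot ρ := by simp [mem_roots hQ]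
  obtain ⟨δ, hδ, hsep⟩ := Q.roots.toFinset.offDiag.exists_pos_forall_lt
    (f := fun p ↦ ‖p.1 - p.2‖) fun p hp ↦
      norm_pos_iff.2 (sub_ne_zero.2 (Finset.mem_offDiag.1 hp).2.2)
  set c₀ := min (δ / 2) 1
  have hc₀ : 0 < c₀ := lt_min (half_pos hδ) one_pos
  have hlc : 0 < ‖Q.leadingCoeff‖ := norm_pos_iff.2 (leadingCoeff_ne_zero.2 hQ)
  refine ⟨‖Q.leadingCoeff‖ * c₀ ^ Q.natDegree, by positivity, fun ζ ↦ ?_⟩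
  obtain ⟨ρ, hρ, hnearest⟩ :=
    Q.roots.toFinset.exists_min_image (fun ρ ↦ ‖ζ - ρ‖) ⟨ξ, hmem.2 hξ⟩
  refine ⟨ρ, hmem.1 hρ, ?_⟩
  set others := Q.roots.filter (· ≠ ρ)
  -- the roots are `δ`-separated, so only the nearest one can be closer than `δ / 2`
  have hfar : ∀ σ ∈ others, c₀ ≤ ‖ζ - σ‖ := by
    intro σ hσ
    obtain ⟨hσQ, hσρ⟩ := Multiset.mem_filter.1 hσ
    have hσ' : σ ∈ Q.roots.toFinset := Multiset.mem_toFinset.2 hσQ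
    have h₁ := hsep (σ, ρ) (Finset.mem_offDiag.2 ⟨hσ', hρ, hσρ⟩)
    have h₂ := hnearest σ hσ'
    have h₃ := norm_sub_le_norm_sub_add_norm_sub σ ζ ρ
    rw [norm_sub_rev σ ζ] at h₃
    linarith [min_le_left (δ / 2) 1]
  have hcard : Multiset.card others ≤ Q.natDegree :=
    (Multiset.card_le_card (Multiset.filter_le _ _)).trans (card_roots' Q)
  rw [(IsAlgClosed.splits Q).eval_eq_prod_roots, ← Multiset.filter_add_not (· = ρ) Q.roots,
    Multiset.map_add, Multiset.prod_add, Multiset.filter_eq', count_roots, norm_mul, norm_mul,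
    Multiset.map_replicate, Multiset.prod_replicate, norm_pow, mul_assoc]
  gcongr ‖Q.leadingCoeff‖ * ?_
  rw [mul_comm]
  gcongr
  calc c₀ ^ Q.natDegree ≤ c₀ ^ Multiset.card others :=
        pow_le_pow_of_le_one hc₀.le (min_le_right _ _) hcard
    _ ≤ _ := by
        simpa using Multiset.pow_card_le_norm_prod (s := others.map (ζ - ·)) hc₀.le
          (by simpa using hfar)

theorem sigmaHat_le {Λ : ℂ[X]} {n : ℕ} {ζ : ℂ} (hζ : ζ ^ n = 1) (hΛζ : Λ.eval ζ ≠ 0) :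
    sigmaHat Λ n ≤ ‖Λ.eval ζ‖ :=
  csInf_le ⟨0, by rintro r ⟨ζ, -, -, rfl⟩; exact norm_nonneg _⟩ ⟨ζ, hζ, hΛζ, rfl⟩

theorem le_sigmaHat {Λ : ℂ[X]} {n : ℕ} {b : ℝ} {ζ₀ : ℂ} (hζ₀ : ζ₀ ^ n = 1)
    (hΛζ₀ : Λ.eval ζ₀ ≠ 0) (hb : ∀ ζ : ℂ, ζ ^ n = 1 → Λ.eval ζ ≠ 0 → b ≤ ‖Λ.eval ζ‖) :
    b ≤ sigmaHat Λ n := by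
  rw [sigmaHat]
  exact le_csInf ⟨_, ζ₀, hζ₀, hΛζ₀, rfl⟩ (by rintro r ⟨ζ, hζ, hΛζ, rfl⟩; exact hb ζ hζ hΛζ)

theorem sigmaHat_pos {Λ : ℂ[X]} {n : ℕ} (hn : n ≠ 0) {ζ₀ : ℂ} (hζ₀ : ζ₀ ^ n = 1)
    (hΛζ₀ : Λ.eval ζ₀ ≠ 0) : 0 < sigmaHat Λ n := by
  set S := {r : ℝ | ∃ ζ : ℂ, ζ ^ n = 1 ∧ Λ.eval ζ ≠ 0 ∧ r = ‖Λ.eval ζ‖}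
  have hfin : S.Finite := by
    refine ((nthRootsFinset n (1 : ℂ)).finite_toSet.image fun ζ ↦ ‖Λ.eval ζ‖).subset ?_
    rintro r ⟨ζ, hζ, -, rfl⟩
    exact ⟨ζ, (mem_nthRootsFinset (Nat.pos_of_ne_zero hn) 1).2 hζ, rfl⟩
  have hne : S.Nonempty := ⟨_, ζ₀, hζ₀, hΛζ₀, rfl⟩
  obtain ⟨ζ, -, hΛζ, hmin⟩ := hne.csInf_mem hfin
  rw [sigmaHat, hmin]
  exact norm_pos_iff.2 hΛζ

theorem exists_eventually_sigmaHat_le_div_pow {Q : ℂ[X]} (hQ : Q ≠ 0) {ξ : ℂ} (hξ : ‖ξ‖ = 1) :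
    ∃ A > 0, ∀ᶠ n : ℕ in atTop,
      0 < sigmaHat Q n ∧ sigmaHat Q n ≤ A / n ^ Q.rootMultiplicity ξ := by
  obtain ⟨C, hC, hCQ⟩ :=
    (isCompact_closedBall (0 : ℂ) 1).exists_pos_forall_norm_eval_le_mul_norm_sub_pow Q ξ
  set m := Q.rootMultiplicity ξ
  refine ⟨C * (2 * Real.pi * (Q.natDegree + 1)) ^ m, by positivity, ?_⟩
  filter_upwards [eventually_gt_atTop Q.natDegree] with n hn
  obtain ⟨ζ, hζ, hQζ, hζξ⟩ := exists_pow_eq_one_eval_ne_zero_norm_sub_le hQ hξ hn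
  refine ⟨sigmaHat_pos (by omega) hζ hQζ, ?_⟩
  calc sigmaHat Q n ≤ ‖Q.eval ζ‖ := sigmaHat_le hζ hQζ
    _ ≤ C * ‖ζ - ξ‖ ^ m := hCQ ζ (by simp [Complex.norm_eq_one_of_pow_eq_one hζ (by omega)])
    _ ≤ C * (2 * Real.pi * (Q.natDegree + 1) / n) ^ m := by gcongr
    _ = C * (2 * Real.pi * (Q.natDegree + 1)) ^ m / n ^ m := by rw [div_pow, mul_div_assoc]

theorem pow_mul_pow_le_pow_of_le_or_le {δ κ x : ℝ} {m D μ : ℕ} (hδ : 0 ≤ δ) (hδ₁ : δ ≤ 1)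
    (hκ : 0 ≤ κ) (hκ₁ : κ ≤ 1) (hmD : m ≤ D) (h : κ ≤ x ∧ m ≤ μ ∨ δ ≤ x) :
    δ ^ D * κ ^ μ ≤ x ^ m := by
  rcases h with ⟨hκx, hmμ⟩ | hδx
  · calc δ ^ D * κ ^ μ ≤ 1 * κ ^ m :=
          mul_le_mul (pow_le_one₀ hδ hδ₁) (pow_le_pow_of_le_one hκ hκ₁ hmμ) (by positivity)
            zero_le_one
      _ ≤ x ^ m := by rw [one_mul]; gcongr
  · calc δ ^ D * κ ^ μ ≤ δ ^ m * 1 :=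
          mul_le_mul (pow_le_pow_of_le_one hδ hδ₁ hmD) (pow_le_one₀ hκ hκ₁) (by positivity)
            (by positivity)
      _ ≤ x ^ m := by rw [mul_one]; gcongr

theorem exists_frequently_div_pow_le_sigmaHat {Q : ℂ[X]} (hQ : Q ≠ 0) {ξ : ℂ}
    (hξ : Q.IsRoot ξ) {μ : ℕ}
    (hμ : ∀ ρ : ℂ, ‖ρ‖ = 1 → Q.IsRoot ρ → Q.rootMultiplicity ρ ≤ μ) :
    ∃ C > 0, ∃ᶠ n : ℕ in atTop, C / n ^ μ ≤ sigmaHat Q n := by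
  classical
  have hmem : ∀ {ρ}, ρ ∈ Q.roots.toFinset ↔ Q.IsRoot ρ := by simp [mem_roots hQ]
  obtain ⟨κ, hκ, hsep⟩ := exists_pos_frequently_div_le_norm_sub
    (Q.roots.toFinset.filter (‖·‖ = 1)) fun ρ hρ ↦ (Finset.mem_filter.1 hρ).2
  obtain ⟨δ, hδ, hoff⟩ := (Q.roots.toFinset.filter (‖·‖ ≠ 1)).exists_pos_forall_lt
    (f := fun ρ ↦ |1 - ‖ρ‖|) fun ρ hρ ↦
      abs_pos.2 (sub_ne_zero.2 (Finset.mem_filter.1 hρ).2.symm)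
  obtain ⟨c, hc, hnearest⟩ := exists_pos_forall_exists_isRoot_mul_norm_sub_pow_le hQ hξ
  set δ₀ := min δ 1
  set κ₀ := min κ 1
  refine ⟨c * δ₀ ^ Q.natDegree * κ₀ ^ μ, by positivity,
    (hsep.and_eventually (eventually_gt_atTop Q.natDegree)).mono ?_⟩
  rintro n ⟨hsepn, hn⟩
  obtain ⟨ζ₀, hζ₀, hQζ₀, -⟩ := exists_pow_eq_one_eval_ne_zero_norm_sub_le hQ norm_one hn
  refine le_sigmaHat hζ₀ hQζ₀ fun ζ hζ hQζ ↦ ?_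
  have hnR : (1 : ℝ) ≤ n := by exact_mod_cast Nat.one_le_of_lt hn
  obtain ⟨ρ, hρ, hbound⟩ := hnearest ζ
  have hclose : κ₀ / n ≤ ‖ζ - ρ‖ ∧ Q.rootMultiplicity ρ ≤ μ ∨ δ₀ ≤ ‖ζ - ρ‖ := by
    by_cases hρ₁ : ‖ρ‖ = 1
    · refine .inl ⟨?_, hμ ρ hρ₁ hρ⟩
      refine (div_le_div_of_nonneg_right (min_le_left κ 1) (by positivity)).trans ?_
      exact hsepn ρ (Finset.mem_filter.2 ⟨hmem.2 hρ, hρ₁⟩) ζ hζ fun h ↦ hQζ (h ▸ hρ)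
    · have h₁ := hoff ρ (Finset.mem_filter.2 ⟨hmem.2 hρ, hρ₁⟩)
      have h₂ := abs_norm_sub_norm_le ζ ρ
      rw [Complex.norm_eq_one_of_pow_eq_one hζ (by omega)] at h₂
      exact .inr (by linarith [min_le_left δ 1])
  have hm : Q.rootMultiplicity ρ ≤ Q.natDegree :=
    (count_roots Q ▸ Multiset.count_le_card ρ Q.roots).trans (card_roots' Q)
  calc c * δ₀ ^ Q.natDegree * κ₀ ^ μ / n ^ μ = c * (δ₀ ^ Q.natDegree * (κ₀ / n) ^ μ) := by
        rw [div_pow]; ring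
    _ ≤ c * ‖ζ - ρ‖ ^ Q.rootMultiplicity ρ := by
        gcongr
        exact pow_mul_pow_le_pow_of_le_or_le (by positivity) (min_le_right δ 1) (by positivity)
          (div_le_one_of_le₀ ((min_le_right κ 1).trans hnR) (by positivity)) hm hclose
    _ ≤ ‖Q.eval ζ‖ := hbound

theorem liminf_eq_of_tendsto_of_eventually_le_of_frequently_le {ι : Type*} {l : Filter ι}
    {f g h : ι → ℝ} {a : ℝ} (hg : Tendsto g l (𝓝 a)) (hh : Tendsto h l (𝓝 a))
    (hgf : ∀ᶠ i in l, g i ≤ f i) (hfh : ∃ᶠ i in l, f i ≤ h i) : liminf f l = a := by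
  have hbelow : ∀ ε > 0, ∀ᶠ i in l, a - ε ≤ f i := fun ε hε ↦
    ((hg.eventually (eventually_gt_nhds (sub_lt_self a hε))).and hgf).mono
      fun i hi ↦ hi.1.le.trans hi.2
  have habove : ∀ ε > 0, ∃ᶠ i in l, f i ≤ a + ε := fun ε hε ↦
    (hfh.and_eventually (hh.eventually (eventually_lt_nhds (lt_add_of_pos_right a hε)))).mono
      fun i hi ↦ hi.1.trans hi.2.le
  have hbdd : IsBoundedUnder (· ≥ ·) l f := isBoundedUnder_of_eventually_ge (hbelow 1 one_pos)
  have hcobdd : IsCoboundedUnder (· ≥ ·) l f := .of_frequently_le (habove 1 one_pos)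
  refine le_antisymm (le_of_forall_pos_le_add fun ε hε ↦
    liminf_le_of_frequently_le (habove ε hε) hbdd) (le_of_forall_pos_le_add fun ε hε ↦ ?_)
  rw [← sub_le_iff_le_add]
  exact le_liminf_of_le hcobdd (hbelow ε hε)

theorem liminf_neg_log_div_log_eq {σ : ℕ → ℝ} {A C μ : ℝ} (hA : 0 < A) (hC : 0 < C)
    (hup : ∀ᶠ n : ℕ in atTop, 0 < σ n ∧ σ n ≤ A / (n : ℝ) ^ μ)
    (hlow : ∃ᶠ n : ℕ in atTop, C / (n : ℝ) ^ μ ≤ σ n) :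
    liminf (fun n : ℕ ↦ -Real.log (σ n) / Real.log n) atTop = μ := by
  have hlog : Tendsto (fun n : ℕ ↦ Real.log n) atTop atTop :=
    Real.tendsto_log_atTop.comp tendsto_natCast_atTop_atTop
  have hlim : ∀ B : ℝ, Tendsto (fun n : ℕ ↦ μ - Real.log B / Real.log n) atTop (𝓝 μ) := fun B ↦ by
    simpa using tendsto_const_nhds.sub (tendsto_const_nhds.div_atTop hlog)
  have hlog_div : ∀ {B : ℝ} {n : ℕ}, 0 < B → 2 ≤ n →
      Real.log (B / (n : ℝ) ^ μ) / Real.log n = Real.log B / Real.log n - μ := by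
    intro B n hB hn
    have hn' : (1 : ℝ) < n := by exact_mod_cast hn
    rw [Real.log_div hB.ne' (Real.rpow_pos_of_pos (by linarith) μ).ne',
      Real.log_rpow (by linarith), sub_div, mul_div_cancel_right₀ _ (Real.log_pos hn').ne']
  refine liminf_eq_of_tendsto_of_eventually_le_of_frequently_le (hlim A) (hlim C) ?_ ?_
  · filter_upwards [hup, eventually_ge_atTop 2] with n ⟨hσ, hσA⟩ hn
    have hlogn : 0 < Real.log n := Real.log_pos (by exact_mod_cast hn)
    have := div_le_div_of_nonneg_right (Real.log_le_log hσ hσA) hlogn.le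
    rw [hlog_div hA hn] at this
    rw [neg_div]; linarith
  · refine (hlow.and_eventually (eventually_ge_atTop 2)).mono fun n ⟨hσC, hn⟩ ↦ ?_
    have hlogn : 0 < Real.log n := Real.log_pos (by exact_mod_cast hn)
    have hpos : 0 < C / (n : ℝ) ^ μ := div_pos hC (Real.rpow_pos_of_pos (by positivity) μ)
    have := div_le_div_of_nonneg_right (Real.log_le_log hpos hσC) hlogn.le
    rw [hlog_div hC hn] at this
    rw [neg_div]; linarith

theorem liminf_shrinkage_eq_max_multiplicity_general
    (Λ : Polynomial ℝ) (hΛ : Λ ≠ 0)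
    (μmax : ℕ)
    (hμmax : IsGreatest {μ : ℕ | ∃ ξ : ℂ, ‖ξ‖ = 1 ∧
      (Λ.map (algebraMap ℝ ℂ)).IsRoot ξ ∧
      (Λ.map (algebraMap ℝ ℂ)).rootMultiplicity ξ = μ} μmax) :
    Filter.liminf
      (fun n : ℕ => -Real.log (sigmaHat (Λ.map (algebraMap ℝ ℂ)) n) / Real.log n)
      Filter.atTop = (μmax : ℝ) := by
  set Q := Λ.map (algebraMap ℝ ℂ)
  have hQ : Q ≠ 0 := Polynomial.map_ne_zero hΛ
  obtain ⟨ξ, hξ, hξQ, rfl⟩ := hμmax.1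
  obtain ⟨A, hA, hup⟩ := exists_eventually_sigmaHat_le_div_pow hQ hξ
  obtain ⟨C, hC, hlow⟩ :=
    exists_frequently_div_pow_le_sigmaHat hQ hξQ fun ρ hρ hρQ ↦ hμmax.2 ⟨ρ, hρ, hρQ, rfl⟩
  refine liminf_neg_log_div_log_eq hA hC ?_ ?_
  · simpa only [Real.rpow_natCast] using hup
  · simpa only [Real.rpow_natCast] using hlow

/-- **Lower shrinkage rate.**  If `Λ` is a nonzero real polynomial with
`Λ(1) ≠ 0 ≠ Λ(−1)` having a root on the unit circle, and `μmax` is the maximal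
multiplicity of a root of `Λ` of absolute value one, then
`liminf (−log σ̂_n(Λ))/(log n) = μmax`. -/
theorem liminf_shrinkage_eq_max_multiplicity
    (Λ : Polynomial ℝ) (hΛ : Λ ≠ 0)
    (h1 : Λ.eval 1 ≠ 0) (hneg1 : Λ.eval (-1) ≠ 0)
    (hex : ∃ ξ : ℂ, ‖ξ‖ = 1 ∧ (Λ.map (algebraMap ℝ ℂ)).IsRoot ξ)
    (μmax : ℕ)
    (hμmax : IsGreatest {μ : ℕ | ∃ ξ : ℂ, ‖ξ‖ = 1 ∧
      (Λ.map (algebraMap ℝ ℂ)).IsRoot ξ ∧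
      (Λ.map (algebraMap ℝ ℂ)).rootMultiplicity ξ = μ} μmax) :
    Filter.liminf
      (fun n : ℕ => -Real.log (sigmaHat (Λ.map (algebraMap ℝ ℂ)) n) / Real.log n)
      Filter.atTop = (μmax : ℝ) :=
  liminf_shrinkage_eq_max_multiplicity_general Λ hΛ μmax hμmax
end

section
/- For every integer n ≥ 2, the complex number ξ = (2n − 1 + i·√(4n − 1))/(2n) satisfies nξ² − (2n−1)ξ + n = 0 and |ξ| = 1, and ξ is not a root of unity (there is no positive integer k with ξ^k = 1). -/
/-!
If `ξ` is a root of unity then so is `ξ⁻¹`, so `ξ + ξ⁻¹` is an algebraic integer. Dividing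
`nξ² − (2n−1)ξ + n = 0` by `nξ` gives `ξ + ξ⁻¹ = (2n − 1)/n = 2 − 1/n`, a rational number that is
not an integer when `n ≥ 2`; since `ℤ` is integrally closed, `ξ` cannot be a root of unity.
-/

open Polynomial

section RootOfUnity

variable {K : Type*} [Field K]

theorem isIntegral_add_inv_of_pow_eq_one {ξ : K} {k : ℕ} (hk : 0 < k) (hξk : ξ ^ k = 1) :
    IsIntegral ℤ (ξ + ξ⁻¹) := by
  have hint : IsIntegral ℤ ξ := ⟨X ^ k - C 1, monic_X_pow_sub_C 1 hk.ne', by simp [hξk]⟩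
  have hinv : ξ⁻¹ = ξ ^ (k - 1) :=
    inv_eq_of_mul_eq_one_right (by rw [← pow_succ', Nat.sub_add_cancel hk, hξk])
  rw [hinv]
  exact hint.add (hint.pow _)

theorem pow_ne_one_of_add_inv_eq_ratCast [CharZero K] {ξ : K} {q : ℚ}
    (hq : ∀ m : ℤ, (m : ℚ) ≠ q) (hξ : ξ + ξ⁻¹ = q) {k : ℕ} (hk : 0 < k) : ξ ^ k ≠ 1 := by
  intro hξk
  have hint := isIntegral_add_inv_of_pow_eq_one hk hξk
  rw [hξ, ← eq_ratCast (algebraMap ℚ K)] at hint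
  obtain ⟨m, hm⟩ := IsIntegrallyClosed.isIntegral_iff.mp
    ((isIntegral_algebraMap_iff (algebraMap ℚ K).injective).mp hint)
  exact hq m (by exact_mod_cast hm)

theorem add_inv_eq_div_of_mul_sq_sub_mul_add_eq_zero {a b ξ : K} (ha : a ≠ 0)
    (h : a * ξ ^ 2 - b * ξ + a = 0) : ξ + ξ⁻¹ = b / a := by
  have hξ : ξ ≠ 0 := by
    rintro rfl
    exact ha (by simpa using h)
  field_simp
  linear_combination h

end RootOfUnity

theorem intCast_ne_two_mul_sub_one_div {n : ℕ} (hn : 2 ≤ n) (m : ℤ) :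
    (m : ℚ) ≠ (2 * n - 1) / n := by
  intro hm
  have hnq : (n : ℚ) ≠ 0 := by positivity
  rw [eq_div_iff hnq] at hm
  have hmz : m * n = 2 * (n : ℤ) - 1 := by exact_mod_cast hm
  have hdvd : (n : ℤ) ∣ 1 := ⟨2 - m, by linarith⟩
  have := Int.le_of_dvd one_pos hdvd
  omega

noncomputable def twistKnotRoot (n : ℕ) : ℂ :=
  (((2 * (n : ℝ) - 1 : ℝ) : ℂ) + ((Real.sqrt (4 * (n : ℝ) - 1) : ℝ) : ℂ) * Complex.I) /
    (2 * (n : ℂ))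

section TwistKnotRoot

variable {n : ℕ}

theorem sq_sqrt_four_mul_sub_one (hn : 0 < n) : Real.sqrt (4 * (n : ℝ) - 1) ^ 2 = 4 * n - 1 := by
  have : (1 : ℝ) ≤ n := by exact_mod_cast hn
  exact Real.sq_sqrt (by linarith)

theorem twistKnotRoot_isRoot (hn : 0 < n) :
    (n : ℂ) * twistKnotRoot n ^ 2 - (2 * (n : ℂ) - 1) * twistKnotRoot n + n = 0 := by
  set s : ℂ := ((Real.sqrt (4 * (n : ℝ) - 1) : ℝ) : ℂ) * Complex.I
  have hs : s * s = -(4 * n - 1) := by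
    have := congrArg ((↑) : ℝ → ℂ) (sq_sqrt_four_mul_sub_one hn)
    push_cast at this
    linear_combination this * Complex.I ^ 2 + (4 * (n : ℂ) - 1) * Complex.I_sq
  have hdiscrim : discrim (n : ℂ) (-(2 * n - 1)) n = s * s := by
    rw [discrim, hs]
    ring
  have hroot := (quadratic_eq_zero_iff (by exact_mod_cast hn.ne') hdiscrim (twistKnotRoot n)).mpr
    (Or.inl (by rw [twistKnotRoot]; push_cast; ring))
  linear_combination hroot

theorem norm_twistKnotRoot (hn : 0 < n) : ‖twistKnotRoot n‖ = 1 := by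
  have hn' : (1 : ℝ) ≤ n := by exact_mod_cast hn
  have hsum : (2 * (n : ℝ) - 1) ^ 2 + Real.sqrt (4 * (n : ℝ) - 1) ^ 2 = (2 * n) ^ 2 := by
    rw [sq_sqrt_four_mul_sub_one hn]
    ring
  rw [twistKnotRoot, norm_div, Complex.norm_add_mul_I, norm_mul, Complex.norm_natCast, hsum,
    Real.sqrt_sq (by positivity)]
  norm_num
  positivity

end TwistKnotRoot

/-- **Odd twist knot polynomial.**  For `n ≥ 2`, the number
`ξ = (2n − 1 + i√(4n − 1)) / (2n)` is a root of `nX² − (2n−1)X + n`, lies on the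
unit circle, and is not a root of unity. -/
theorem odd_twist_knot_root_not_root_of_unity
    (n : ℕ) (hn : 2 ≤ n) (ξ : ℂ)
    (hξ : ξ = (((2 * (n : ℝ) - 1 : ℝ) : ℂ) +
      ((Real.sqrt (4 * (n : ℝ) - 1) : ℝ) : ℂ) * Complex.I) / (2 * (n : ℂ))) :
    (n : ℂ) * ξ ^ 2 - (2 * (n : ℂ) - 1) * ξ + (n : ℂ) = 0 ∧
    ‖ξ‖ = 1 ∧
    ∀ k : ℕ, 0 < k → ξ ^ k ≠ 1 := by
  rw [← twistKnotRoot] at hξ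
  subst hξ
  have hpos : 0 < n := by omega
  have hroot := twistKnotRoot_isRoot hpos
  have hsum : twistKnotRoot n + (twistKnotRoot n)⁻¹ = (((2 * n - 1) / n : ℚ) : ℂ) := by
    rw [add_inv_eq_div_of_mul_sq_sub_mul_add_eq_zero (by exact_mod_cast hpos.ne') hroot]
    push_cast
    ring
  exact ⟨hroot, norm_twistKnotRoot hpos, fun k hk =>
    pow_ne_one_of_add_inv_eq_ratCast (intCast_ne_two_mul_sub_one_div hn) hsum hk⟩
end
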